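/- Let eta be an ordinal with 2^eta = eta and h any ordinal. Define an ordinal alpha to be (eta,h)-complete if for all k < eta: k ◁ alpha iff eta*h + k ◁ alpha (ordinal multiplication and addition). Then for any finite set E of fixed points eta_i = 2^{eta_i}, any finite set H of ordinals, and any ordinal beta, there exists an ordinal alpha with L_beta ⊆ L_alpha which is (eta_i, h_j)-complete for all eta_i ∈ E and h_j ∈ H. -/

import Mathlib

open scoped Classical symmDiff

/-- `Lset α` is the finite set of exponents appearing in the base-2 Cantor
normal form of the ordinal `α`. -/
noncomputable def Lset (α : Ordinal) : Finset Ordinal :=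
  ((Ordinal.CNF 2 α).map Prod.fst).toFinset

/-- Formal inclusion: `α ⊑ β` iff `L_α ⊆ L_β`. -/
def fincl (α β : Ordinal) : Prop := Lset α ⊆ Lset β

/-- Formal membership: `β ◁ α` iff `2^β` appears in the base-2 normal form of `α`. -/
def fmem (β α : Ordinal) : Prop := β ∈ Lset α

/-- `α` is `(η,h)`-complete if for all `k < η`, `k ◁ α ↔ η*h + k ◁ α`. -/
def IsEtaHComplete (η h α : Ordinal) : Prop :=
  ∀ k < η, (fmem k α ↔ fmem (η * h + k) α)

/-!
Every finite set of ordinals is `Lset` of some ordinal, so it suffices to find a finite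
`S ⊇ L_β` with `k ∈ S ↔ η * h + k ∈ S`. If `S` is closed under remainders modulo every
`η ∈ E`, the backward direction is automatic, as `(η * h + k) % η = k`. For the forward
direction the translates `η * h + k` are added level by level. Fixed points of `2 ^ ·` form a
divisibility chain, `η' = η * 2 ^ (η' - η)` for `η ≤ η'`, so a new translate taken modulo
`η' ∈ E` is either an old remainder or the translate `η * (h % 2 ^ (η' - η)) + k`; closing `H`
under these remainders beforehand keeps `S` closed.
-/

open Ordinal Finset

lemma Lset_two_opow_add {m α : Ordinal} (h : α < 2 ^ m) :
    Lset (2 ^ m + α) = insert m (Lset α) := by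
  have hCNF := CNF.opow_mul_add one_lt_two one_ne_zero one_lt_two h
  rw [mul_one] at hCNF
  simp [Lset, hCNF]

lemma lt_two_opow_of_forall_mem_Lset_lt {α m : Ordinal} (h : ∀ e ∈ Lset α, e < m) :
    α < 2 ^ m := by
  rcases eq_or_ne α 0 with rfl | hα
  · exact opow_pos m zero_lt_two
  · rw [lt_opow_iff_log_lt one_lt_two hα]
    exact h _ (by simp [Lset, CNF.ne_zero hα])

lemma exists_Lset_eq (F : Finset Ordinal) : ∃ α, Lset α = F := by
  induction F using Finset.induction_on_max with
  | empty => exact ⟨0, by simp [Lset]⟩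
  | insert m F hlt ih =>
    obtain ⟨α, rfl⟩ := ih
    exact ⟨2 ^ m + α, Lset_two_opow_add (lt_two_opow_of_forall_mem_Lset_lt hlt)⟩

lemma mul_two_opow_sub_of_two_opow_eq_self {η η' : Ordinal} (hη : 2 ^ η = η)
    (hη' : 2 ^ η' = η') (hle : η ≤ η') : η * 2 ^ (η' - η) = η' := by
  conv_lhs => enter [1]; rw [← hη]
  rw [← opow_add, Ordinal.add_sub_cancel_of_le hle, hη']

lemma isChain_dvd_of_two_opow_eq_self {E : Set Ordinal} (hE : ∀ η ∈ E, (2 : Ordinal) ^ η = η) :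
    IsChain (· ∣ ·) E := by
  intro η hη η' hη' _
  rcases le_total η η' with hle | hle
  · exact .inl ⟨_, (mul_two_opow_sub_of_two_opow_eq_self (hE η hη) (hE η' hη') hle).symm⟩
  · exact .inr ⟨_, (mul_two_opow_sub_of_two_opow_eq_self (hE η' hη') (hE η hη) hle).symm⟩

def IsModClosed (D S : Finset Ordinal) : Prop := ∀ x ∈ S, ∀ d ∈ D, x % d ∈ S

noncomputable def modClosure (D R : Finset Ordinal) : Finset Ordinal :=
  R ∪ image₂ (· % ·) R D

lemma subset_modClosure (D R : Finset Ordinal) : R ⊆ modClosure D R :=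
  subset_union_left

lemma mod_mem_modClosure {D R : Finset Ordinal} {r d : Ordinal} (hr : r ∈ R) (hd : d ∈ D) :
    r % d ∈ modClosure D R :=
  mem_union_right _ (mem_image₂_of_mem hr hd)

/-- For a chain of moduli one reduction is enough: `r % d' % d` is `r % d` or `r % d'`. -/
lemma isModClosed_modClosure {D : Finset Ordinal} (hD : IsChain (· ∣ ·) (D : Set Ordinal))
    (R : Finset Ordinal) : IsModClosed D (modClosure D R) := by
  intro x hx d hd
  rcases mem_union.1 hx with hx | hx
  · exact mod_mem_modClosure hx hd
  obtain ⟨r, hr, d', hd', rfl⟩ := mem_image₂.1 hx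
  rcases hD.total (mem_coe.2 hd) (mem_coe.2 hd') with hdd' | hd'd
  · rw [mod_mod_of_dvd _ hdd']
    exact mod_mem_modClosure hr hd
  rcases eq_or_ne d 0 with rfl | hd0
  · rwa [Ordinal.mod_zero]
  rcases eq_or_ne d' 0 with rfl | hd'0
  · rw [Ordinal.mod_zero]
    exact mod_mem_modClosure hr hd
  rw [mod_eq_of_lt ((mod_lt r hd'0).trans_le (le_of_dvd hd0 hd'd))]
  exact mem_union_right _ hx

noncomputable def addTranslates (H : Finset Ordinal) (η : Ordinal) (S : Finset Ordinal) :
    Finset Ordinal :=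
  S ∪ image₂ (fun h s => η * h + s) H (S.filter (· < η))

lemma subset_addTranslates (H : Finset Ordinal) (η : Ordinal) (S : Finset Ordinal) :
    S ⊆ addTranslates H η S :=
  subset_union_left

lemma mul_add_mem_addTranslates {H S : Finset Ordinal} {η h s : Ordinal} (hh : h ∈ H)
    (hs : s ∈ S) (hsη : s < η) : η * h + s ∈ addTranslates H η S :=
  mem_union_right _ (mem_image₂_of_mem hh (mem_filter.2 ⟨hs, hsη⟩))

lemma mem_of_mem_addTranslates_of_lt {H S : Finset Ordinal} {η y : Ordinal}
    (hy : y ∈ addTranslates H η S) (hyη : y < η) : y ∈ S := by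
  rcases mem_union.1 hy with hy | hy
  · exact hy
  obtain ⟨h, -, s, hs, rfl⟩ := mem_image₂.1 hy
  rcases eq_or_ne h 0 with rfl | h0
  · simpa using (mem_filter.1 hs).1
  · exact absurd ((le_mul_left η (pos_iff_ne_zero.2 h0)).trans le_self_add) hyη.not_ge

noncomputable def twoOpowDiffs (E : Finset Ordinal) : Finset Ordinal :=
  image₂ (fun η η' => 2 ^ (η' - η)) E E

lemma isChain_dvd_twoOpowDiffs (E : Finset Ordinal) :
    IsChain (· ∣ ·) (twoOpowDiffs E : Set Ordinal) := by
  intro c hc c' hc' _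
  obtain ⟨-, -, -, -, rfl⟩ := mem_image₂.1 (mem_coe.1 hc)
  obtain ⟨-, -, -, -, rfl⟩ := mem_image₂.1 (mem_coe.1 hc')
  exact (le_total _ _).imp (opow_dvd_opow 2) (opow_dvd_opow 2)

lemma isModClosed_addTranslates {E H : Finset Ordinal} (hE : ∀ η ∈ E, (2 : Ordinal) ^ η = η)
    (hH : IsModClosed (twoOpowDiffs E) H) {S : Finset Ordinal}
    (hS : IsModClosed E S) {η : Ordinal} (hη : η ∈ E) :
    IsModClosed E (addTranslates H η S) := by
  intro y hy η' hη'
  rcases mem_union.1 hy with hy | hy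
  · exact subset_addTranslates _ _ _ (hS y hy η' hη')
  obtain ⟨h, hh, s, hs, rfl⟩ := mem_image₂.1 hy
  obtain ⟨hs, hsη⟩ := mem_filter.1 hs
  rcases le_or_gt η' η with hle | hlt
  · rw [← mul_two_opow_sub_of_two_opow_eq_self (hE η' hη') (hE η hη) hle, mul_assoc,
      mul_add_mod_self]
    exact subset_addTranslates _ _ _ (hS s hs η' hη')
  · rw [← mul_two_opow_sub_of_two_opow_eq_self (hE η hη) (hE η' hη') hlt.le,
      mul_add_mod_mul hsη]
    exact mul_add_mem_addTranslates (hH h hh _ (mem_image₂_of_mem hη hη')) hs hsη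

/-- Translates are added level by level from the bottom up, so that adding those at level `η`
creates no new element below `η`. -/
lemma exists_translate_closed_superset {E H : Finset Ordinal}
    (hE : ∀ η ∈ E, (2 : Ordinal) ^ η = η) (hH : IsModClosed (twoOpowDiffs E) H)
    {R : Finset Ordinal} (hR : IsModClosed E R) (F : Finset Ordinal) (hF : F ⊆ E) :
    ∃ S, R ⊆ S ∧ IsModClosed E S ∧ ∀ η ∈ F, ∀ h ∈ H, ∀ k ∈ S, k < η → η * h + k ∈ S := by
  induction F using Finset.induction_on_max with
  | empty => exact ⟨R, subset_rfl, hR, by simp⟩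
  | insert a F hlt ih =>
    obtain ⟨S, hRS, hS, hSF⟩ := ih ((subset_insert a F).trans hF)
    have ha : a ∈ E := hF (mem_insert_self a F)
    refine ⟨addTranslates H a S, hRS.trans (subset_addTranslates _ _ _),
      isModClosed_addTranslates hE hH hS ha, ?_⟩
    intro η hη h hh k hk hkη
    rcases mem_insert.1 hη with rfl | hη
    · exact mul_add_mem_addTranslates hh (mem_of_mem_addTranslates_of_lt hk hkη) hkη
    · have hkS := mem_of_mem_addTranslates_of_lt hk (hkη.trans (hlt η hη))
      exact subset_addTranslates _ _ _ (hSF η hη h hh k hkS hkη)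

/-- For any finite set `E` of fixed points `η = 2^η`, any finite set `H` of
ordinals, and any `β`, there is an `α` with `L_β ⊆ L_α` which is
`(η,h)`-complete for all `η ∈ E`, `h ∈ H`. -/
theorem exists_complete (E H : Finset Ordinal) (β : Ordinal)
    (hE : ∀ η ∈ E, (2 : Ordinal) ^ η = η) :
    ∃ α : Ordinal, Lset β ⊆ Lset α ∧ ∀ η ∈ E, ∀ h ∈ H, IsEtaHComplete η h α := by
  obtain ⟨S, hβS, hS, hSE⟩ := exists_translate_closed_superset hE
    (isModClosed_modClosure (isChain_dvd_twoOpowDiffs E) H)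
    (isModClosed_modClosure (isChain_dvd_of_two_opow_eq_self hE) (Lset β)) E subset_rfl
  obtain ⟨α, rfl⟩ := exists_Lset_eq S
  refine ⟨α, (subset_modClosure _ _).trans hβS,
    fun η hη h hh k hk => ⟨fun hkα => ?_, fun hα => ?_⟩⟩
  · exact hSE η hη h (subset_modClosure _ _ hh) k hkα hk
  · have hkα := hS _ hα η hη
    rwa [mul_add_mod_self, mod_eq_of_lt hk] at hkα
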